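/- arXiv:0811.2198 — 4 statements merged into one kernel-verified Lean document; each statement's English description precedes it below -/
import Mathlib

section
/- Let α be an ordinal, and let A, B be nonempty types. Suppose F : (α → B) → (α → A) is strongly causal (i.e., for all g g' : α → B and β < α, if g and g' agree on all γ < β then F g and F g' agree on all γ ≤ β), and G : (α → A) → (α → B) is causal (i.e., if f and f' agree on all γ ≤ β then G f and G f' agree on all γ ≤ β). Then there exists a unique pair (f, g) with f : α → A, g : α → B such that f = F g and g = G f. -/
abbrev Below (α : Ordinal) := {β : Ordinal // β < α}

def StronglyCausal {α : Ordinal} {A B : Type*}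
    (F : (Below α → B) → (Below α → A)) : Prop :=
  ∀ g g' : Below α → B, ∀ β : Below α,
    (∀ γ : Below α, γ.val < β.val → g γ = g' γ) →
    ∀ γ : Below α, γ.val ≤ β.val → F g γ = F g' γ

def Causal {α : Ordinal} {A B : Type*}
    (G : (Below α → A) → (Below α → B)) : Prop :=
  ∀ f f' : Below α → A, ∀ β : Below α,
    (∀ γ : Below α, γ.val ≤ β.val → f γ = f' γ) →
    ∀ γ : Below α, γ.val ≤ β.val → G f γ = G f' γ

noncomputable def fp {α : Ordinal} {A B : Type} [Nonempty A]
    (F : (Below α → B) → (Below α → A))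
    (G : (Below α → A) → (Below α → B)) : Below α → A :=
  fun β => F (G (fun γ => if h : γ.val < β.val then fp F G γ else Classical.arbitrary A)) β
termination_by β => β.val
decreasing_by exact h

theorem fp_fixed {α : Ordinal} {A B : Type} [Nonempty A]
    (F : (Below α → B) → (Below α → A)) (hF : StronglyCausal F)
    (G : (Below α → A) → (Below α → B)) (hG : Causal G) (β : Below α) :
    fp F G β = F (G (fp F G)) β := by
  rw [fp]
  exact hF _ _ β (fun γ hγ => hG _ _ γ
    (fun δ hδ => by simp [lt_of_le_of_lt hδ hγ]) γ le_rfl) β le_rfl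

theorem unique_play (α : Ordinal) (A B : Type) [Nonempty A] [Nonempty B]
    (F : (Below α → B) → (Below α → A)) (hF : StronglyCausal F)
    (G : (Below α → A) → (Below α → B)) (hG : Causal G) :
    ∃! p : (Below α → A) × (Below α → B), p.1 = F p.2 ∧ p.2 = G p.1 := by
  refine ⟨(fp F G, G (fp F G)), ⟨funext (fp_fixed F hF G hG), rfl⟩, ?_⟩
  rintro ⟨f, g⟩ ⟨hf, hg⟩
  have key : ∀ o : Ordinal, ∀ β : Below α, β.val = o → f β = fp F G β := by
    intro o
    induction o using Ordinal.induction with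
    | _ o ih =>
      intro β hβ
      dsimp only at hf hg
      have h1 : f β = F (G f) β := by conv_lhs => rw [hf, hg]
      rw [h1, fp_fixed F hF G hG]
      exact hF _ _ β (fun γ hγ => hG _ _ γ
        (fun δ hδ => ih δ.val (lt_of_le_of_lt hδ (hβ ▸ hγ)) δ rfl)
        γ le_rfl) β le_rfl
  have hfe : f = fp F G := funext fun β => key β.val β rfl
  dsimp only at hg
  simp only [Prod.mk.injEq]
  exact ⟨hfe, by rw [hg, hfe]⟩
end

section
/- Let T be a finite type, t a function from ordinals to T, and suppose: (i) there is a binary operation ⊕ on T such that t(α + β) = t(α) ⊕ t(β) for all ordinals α, β, with ⊕ associative on the range of t; (ii) there is a function m : T → T such that whenever (α_i)_{i<ω} is a sequence of positive ordinals with t(α_i) = c for all i, then t(∑_{i<ω} α_i) = m(c), where ∑_{i<ω} α_i is the supremum of the finite partial sums. Then there exists a natural number p with t(ω^p) = t(ω^(p+1)), and for this p one has t(ω^p · α) = t(ω^p) for every countable ordinal α > 0. -/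
open Ordinal

private lemma ofFn_sum_succ' (δ : ℕ → Ordinal) (k : ℕ) :
    (List.ofFn fun i : Fin (k + 1) => δ (i : ℕ)).sum
      = (List.ofFn fun i : Fin k => δ (i : ℕ)).sum + δ k := by
  rw [List.ofFn_succ']
  simp

private lemma ofFn_sum_const (o : Ordinal) (k : ℕ) :
    (List.ofFn fun _ : Fin k => o).sum = o * k := by
  induction k with
  | zero => simp
  | succ k ih =>
    rw [ofFn_sum_succ' (fun _ => o) k, ih, Nat.cast_succ, mul_add, mul_one]

private lemma iSup_ofFn_const (o : Ordinal) :
    (⨆ k : ℕ, (List.ofFn fun _ : Fin k => o).sum) = o * ω := by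
  apply le_antisymm
  · exact Ordinal.iSup_le fun k => by
      rw [ofFn_sum_const]
      exact mul_le_mul_right (nat_lt_omega0 k).le o
  · refine (mul_le_iff_of_isSuccLimit isSuccLimit_omega0).2 fun b hb => ?_
    obtain ⟨n, rfl⟩ := lt_omega0.1 hb
    rw [← ofFn_sum_const o n]
    exact Ordinal.le_iSup (fun k : ℕ => (List.ofFn fun _ : Fin k => o).sum) n

theorem abstract_multiplication_lemma
    (T : Type) [Fintype T] (t : Ordinal → T)
    (op : T → T → T)
    (hadd : ∀ α β : Ordinal, t (α + β) = op (t α) (t β))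
    (hassoc : ∀ a b c : T, a ∈ Set.range t → b ∈ Set.range t → c ∈ Set.range t →
      op (op a b) c = op a (op b c))
    (m : T → T)
    (hsum : ∀ (α : ℕ → Ordinal) (c : T), (∀ i, 0 < α i) → (∀ i, t (α i) = c) →
      t (⨆ k : ℕ, (List.ofFn (fun i : Fin k => α (i : ℕ))).sum) = m c) :
    ∃ p : ℕ, t (ω ^ (p : Ordinal)) = t (ω ^ ((p : Ordinal) + 1)) ∧
      ∀ α : Ordinal, 0 < α → α.card ≤ Cardinal.aleph0 →
        t (ω ^ (p : Ordinal) * α) = t (ω ^ (p : Ordinal)) := by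
  classical
  -- Step 0 : t (o * ω) = m (t o) for positive o
  have hmo : ∀ o : Ordinal, 0 < o → t (o * ω) = m (t o) := by
    intro o ho
    have key := hsum (fun _ => o) (t o) (fun _ => ho) (fun _ => rfl)
    have hs : (⨆ k : ℕ, (List.ofFn fun _ : Fin k => o).sum) = o * ω := iSup_ofFn_const o
    rwa [hs] at key
  -- Pigeonhole, giving q, r with q + 1 < r and the same type of ω^q, ω^r
  obtain ⟨a, b, hne, hab⟩ :=
    Finite.exists_ne_map_eq_of_infinite (fun n : ℕ => t (ω ^ ((2 * n : ℕ) : Ordinal)))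
  obtain ⟨q, r, hqr, h_eq⟩ : ∃ q r : ℕ, q + 1 < r ∧
      t (ω ^ (q : Ordinal)) = t (ω ^ (r : Ordinal)) := by
    rcases hne.lt_or_gt with h | h
    · exact ⟨2 * a, 2 * b, by omega, hab⟩
    · exact ⟨2 * b, 2 * a, by omega, hab.symm⟩
  -- basic ordinal facts
  have h1 : ω ^ ((q : Ordinal) + 1) < ω ^ (r : Ordinal) := by
    apply (opow_lt_opow_iff_right one_lt_omega0).2
    have : ((q + 1 : ℕ) : Ordinal) < ((r : ℕ) : Ordinal) := Nat.cast_lt.2 hqr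
    simpa using this
  have hadd1 : ω ^ ((q : Ordinal) + 1) + ω ^ (r : Ordinal) = ω ^ (r : Ordinal) :=
    add_omega0_opow h1
  have hqlt : ω ^ (q : Ordinal) < ω ^ ((q : Ordinal) + 1) :=
    (opow_lt_opow_iff_right one_lt_omega0).2 (lt_add_one _)
  have hadd2 : ω ^ (q : Ordinal) + ω ^ ((q : Ordinal) + 1) = ω ^ ((q : Ordinal) + 1) :=
    add_omega0_opow hqlt
  have hxpos : (0 : Ordinal) < ω ^ ((q : Ordinal) + 1) := opow_pos _ omega0_pos
  have hsucc1 : ω ^ ((q : Ordinal) + 1) = ω ^ (q : Ordinal) * ω := by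
    rw [add_one_eq_succ, opow_succ]
  have hsucc2 : ω ^ ((q : Ordinal) + 1 + 1) = ω ^ ((q : Ordinal) + 1) * ω := by
    rw [add_one_eq_succ ((q : Ordinal) + 1), opow_succ]
  -- the type c of ω^q
  have hc2 : t (ω ^ ((q : Ordinal) + 1) + ω ^ (q : Ordinal)) = t (ω ^ (q : Ordinal)) := by
    rw [hadd, h_eq, ← hadd, hadd1, ← h_eq]
  have hA : t (ω ^ ((q : Ordinal) + 1)) = m (t (ω ^ (q : Ordinal))) := by
    have := hmo (ω ^ (q : Ordinal)) (opow_pos _ omega0_pos)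
    rwa [← hsucc1] at this
  have hB : t (ω ^ ((q : Ordinal) + 1 + 1)) = m (t (ω ^ (q : Ordinal))) := by
    have hpos : (0 : Ordinal) < ω ^ ((q : Ordinal) + 1) + ω ^ (q : Ordinal) :=
      lt_of_lt_of_le hxpos le_self_add
    have h := hmo _ hpos
    rw [hc2, add_mul_of_isSuccLimit hadd2 isSuccLimit_omega0, ← hsucc2] at h
    exact h
  -- p := q + 1 works; set x = ω^(q+1), e = t x
  have hpe : t (ω ^ ((q : Ordinal) + 1 + 1)) = t (ω ^ ((q : Ordinal) + 1)) := hB.trans hA.symm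
  have hme : m (t (ω ^ ((q : Ordinal) + 1))) = t (ω ^ ((q : Ordinal) + 1)) := by
    have h := hmo _ hxpos
    rw [← hsucc2] at h
    rw [← h, hpe]
  have hopee : op (t (ω ^ ((q : Ordinal) + 1))) (t (ω ^ ((q : Ordinal) + 1)))
      = t (ω ^ ((q : Ordinal) + 1)) := by
    have hxlt : ω ^ ((q : Ordinal) + 1) < ω ^ ((q : Ordinal) + 1 + 1) :=
      (opow_lt_opow_iff_right one_lt_omega0).2 (lt_add_one _)
    have h := hadd (ω ^ ((q : Ordinal) + 1)) (ω ^ ((q : Ordinal) + 1 + 1))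
    rw [add_omega0_opow hxlt, hpe] at h
    exact h.symm
  -- main claim by transfinite induction
  have main : ∀ α : Ordinal, 0 < α → α.card ≤ Cardinal.aleph0 →
      t (ω ^ ((q : Ordinal) + 1) * α) = t (ω ^ ((q : Ordinal) + 1)) := by
    intro α
    induction α using Ordinal.limitRecOn with
    | zero => intro h; exact absurd h (lt_irrefl 0)
    | add_one β IH =>
      intro _ hcard
      rcases eq_or_ne β 0 with rfl | hβ
      · rw [zero_add, mul_one]
      · have hβpos : 0 < β := pos_iff_ne_zero.2 hβ
        have hcardβ : β.card ≤ Cardinal.aleph0 :=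
          le_trans (card_le_card (Order.le_succ β)) hcard
        rw [mul_add_one, hadd, IH hβpos hcardβ, hopee]
    | limit α hα IH =>
      intro _ hcard
      -- a surjection onto ordinals below α
      have hmk : Cardinal.mk (Set.Iio α) ≤ Cardinal.aleph0 := by
        rw [mk_Iio_ordinal]
        exact (Cardinal.lift_le.2 hcard).trans_eq Cardinal.lift_aleph0
      have hcount : Countable (Set.Iio α) := Cardinal.mk_le_aleph0_iff.1 hmk
      have hne' : Nonempty (Set.Iio α) := ⟨⟨0, hα.pos⟩⟩
      obtain ⟨g, hg⟩ := exists_surjective_nat (Set.Iio α)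
      -- a strictly increasing cofinal sequence below α
      let β : ℕ → Ordinal := fun k =>
        Nat.rec ((g 0 : Ordinal) + 1) (fun k βk => max βk (g (k + 1)) + 1) k
      have hβ0 : β 0 = (g 0 : Ordinal) + 1 := rfl
      have hβs : ∀ k, β (k + 1) = max (β k) (g (k + 1)) + 1 := fun k => rfl
      have hβlt : ∀ k, β k < α := by
        intro k
        induction k with
        | zero =>
          rw [hβ0, add_one_eq_succ]
          exact hα.succ_lt (g 0).2
        | succ k ih =>
          rw [hβs, add_one_eq_succ]
          exact hα.succ_lt (max_lt ih (g (k + 1)).2)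
      have hβmono : ∀ k, β k < β (k + 1) := by
        intro k
        rw [hβs]
        exact lt_of_le_of_lt (le_max_left _ _) (lt_add_one _)
      have hβcover : ∀ γ < α, ∃ k, γ < β k := by
        intro γ hγ
        obtain ⟨k, hk⟩ := hg ⟨γ, hγ⟩
        have hgk : (g k : Ordinal) = γ := by rw [hk]
        refine ⟨k, ?_⟩
        cases k with
        | zero => rw [hβ0, ← hgk]; exact lt_add_one _
        | succ k =>
          rw [hβs, ← hgk]
          exact lt_of_le_of_lt (le_max_right _ _) (lt_add_one _)
      -- telescoping differences
      let δ : ℕ → Ordinal := fun k => Nat.rec (β 0) (fun k _ => β (k + 1) - β k) k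
      have hδ0 : δ 0 = β 0 := rfl
      have hδs : ∀ k, δ (k + 1) = β (k + 1) - β k := fun k => rfl
      have hδsum : ∀ k, β k + δ (k + 1) = β (k + 1) := by
        intro k
        rw [hδs]
        exact Ordinal.add_sub_cancel_of_le (hβmono k).le
      have hδpos : ∀ k, 0 < δ k := by
        intro k
        cases k with
        | zero => rw [hδ0, hβ0]; exact lt_of_le_of_lt zero_le (lt_add_one _)
        | succ k =>
          rw [pos_iff_ne_zero]
          intro h0
          have := hδsum k
          rw [h0, add_zero] at this
          exact absurd this (hβmono k).ne
      have hδlt : ∀ k, δ k < α := by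
        intro k
        cases k with
        | zero => rw [hδ0]; exact hβlt 0
        | succ k => exact lt_of_le_of_lt ((hδs k) ▸ sub_le_self _ _) (hβlt (k + 1))
      have hδt : ∀ k, t (ω ^ ((q : Ordinal) + 1) * δ k) = t (ω ^ ((q : Ordinal) + 1)) :=
        fun k => IH (δ k) (hδlt k) (hδpos k)
          (le_trans (card_le_card (hδlt k).le) hcard)
      -- partial sums telescope
      have hSsum : ∀ k, (List.ofFn fun i : Fin (k + 1) =>
          ω ^ ((q : Ordinal) + 1) * δ (i : ℕ)).sum = ω ^ ((q : Ordinal) + 1) * β k := by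
        intro k
        induction k with
        | zero => simp [hδ0]
        | succ k ih =>
          rw [ofFn_sum_succ' (fun i => ω ^ ((q : Ordinal) + 1) * δ i) (k + 1), ih,
            ← mul_add, hδsum k]
      have hsup : (⨆ k : ℕ, (List.ofFn fun i : Fin k =>
          ω ^ ((q : Ordinal) + 1) * δ (i : ℕ)).sum) = ω ^ ((q : Ordinal) + 1) * α := by
        apply le_antisymm
        · apply Ordinal.iSup_le
          intro k
          cases k with
          | zero => simp
          | succ k =>
            rw [hSsum k]
            exact mul_le_mul_right (hβlt k).le _
        · refine (mul_le_iff_of_isSuccLimit hα).2 fun γ hγ => ?_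
          obtain ⟨k, hk⟩ := hβcover γ hγ
          calc ω ^ ((q : Ordinal) + 1) * γ ≤ ω ^ ((q : Ordinal) + 1) * β k :=
                mul_le_mul_right hk.le _
            _ = (List.ofFn fun i : Fin (k + 1) =>
                  ω ^ ((q : Ordinal) + 1) * δ (i : ℕ)).sum := (hSsum k).symm
            _ ≤ _ := Ordinal.le_iSup (fun k : ℕ => (List.ofFn fun i : Fin k =>
                  ω ^ ((q : Ordinal) + 1) * δ (i : ℕ)).sum) (k + 1)
      have key := hsum (fun k => ω ^ ((q : Ordinal) + 1) * δ k) (t (ω ^ ((q : Ordinal) + 1)))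
        (fun k => mul_pos hxpos (hδpos k)) hδt
      rwa [hsup, hme] at key
  -- conclusion
  refine ⟨q + 1, ?_, ?_⟩
  · have hcast : ((q + 1 : ℕ) : Ordinal) = (q : Ordinal) + 1 := Nat.cast_succ q
    rw [hcast]
    exact hA.trans hB.symm
  · intro α h1 h2
    have hcast : ((q + 1 : ℕ) : Ordinal) = (q : Ordinal) + 1 := Nat.cast_succ q
    rw [hcast]
    exact main α h1 h2
end

section
/- Let T be a finite type and t a function from ordinals to T satisfying: t(α + β) depends only on t(α) and t(β) (i.e., t(α+β) = f(t(α), t(β)) for some f : T × T → T), and whenever (α_i)_{i<ω} is a sequence of positive ordinals all of the same t-value c, then t of the ω-sum ∑_{i<ω} α_i equals m(c) for some fixed m : T → T. If q < r are natural numbers with r ≥ q + 2 and t(ω^q) = t(ω^r), then t(ω^(q+1)) = t(ω^(q+2)). -/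
open Ordinal

/-
Write `c = t(ω^q)`. The ω-sum of copies of `ω^q` is `ω^(q+1)`, so `t(ω^(q+1)) = m c`.
Since `q + 1 < r`, `ω^(q+1) + ω^r = ω^r`, and as `t` of a sum only sees the `t`-values of the
summands, `t(ω^(q+1) + ω^q) = t(ω^(q+1) + ω^r) = t(ω^r) = c`. The ω-sum of copies of
`ω^(q+1) + ω^q` is `ω^(q+2)`, so `t(ω^(q+2)) = m c` as well.
-/

theorem iSup_sum_ofFn_const (a : Ordinal) :
    ⨆ k : ℕ, (List.ofFn fun _ : Fin k => a).sum = a * ω := by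
  simp_rw [List.ofFn_const, List.sum_replicate, nsmul_eq_mul]
  exact iSup_mul_natCast a

theorem omega0_opow_add_one_add_opow_mul_omega0 (x : Ordinal) :
    (ω ^ (x + 1) + ω ^ x) * ω = ω ^ (x + 2) := by
  have hlt : ω ^ x < ω ^ (x + 1) := (opow_lt_opow_iff_right one_lt_omega0).2 (lt_add_one x)
  rw [add_mul_of_isSuccLimit (add_omega0_opow hlt) isSuccLimit_omega0, ← opow_add_one,
    add_assoc, one_add_one_eq_two]

theorem key_step_power_stabilizes_general
    (T : Type) (t : Ordinal → T)
    (f : T × T → T)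
    (hadd : ∀ α β : Ordinal, t (α + β) = f (t α, t β))
    (m : T → T)
    (hsum : ∀ (α : ℕ → Ordinal) (c : T), (∀ i, 0 < α i) → (∀ i, t (α i) = c) →
      t (⨆ k : ℕ, (List.ofFn (fun i : Fin k => α (i : ℕ))).sum) = m c)
    (q r : ℕ) (hr : q + 2 ≤ r)
    (heq : t (ω ^ (q : Ordinal)) = t (ω ^ (r : Ordinal))) :
    t (ω ^ ((q : Ordinal) + 1)) = t (ω ^ ((q : Ordinal) + 2)) := by
  have hsum_const (a : Ordinal) (ha : 0 < a) : t (a * ω) = m (t a) := by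
    rw [← iSup_sum_ofFn_const]
    exact hsum (fun _ => a) (t a) (fun _ => ha) (fun _ => rfl)
  have hq_succ_lt_r : (q : Ordinal) + 1 < r := by exact_mod_cast (by omega : q + 1 < r)
  have habsorb : ω ^ ((q : Ordinal) + 1) + ω ^ (r : Ordinal) = ω ^ (r : Ordinal) :=
    add_omega0_opow ((opow_lt_opow_iff_right one_lt_omega0).2 hq_succ_lt_r)
  have hterm : t (ω ^ ((q : Ordinal) + 1) + ω ^ (q : Ordinal)) = t (ω ^ (q : Ordinal)) := by
    rw [hadd, heq, ← hadd, habsorb]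
  calc t (ω ^ ((q : Ordinal) + 1))
      = m (t (ω ^ (q : Ordinal))) := by
        rw [opow_add_one, hsum_const _ (opow_pos _ omega0_pos)]
    _ = m (t (ω ^ ((q : Ordinal) + 1) + ω ^ (q : Ordinal))) := by rw [hterm]
    _ = t (ω ^ ((q : Ordinal) + 2)) := by
        rw [← omega0_opow_add_one_add_opow_mul_omega0,
          hsum_const _ ((opow_pos _ omega0_pos).trans_le le_self_add)]

theorem key_step_power_stabilizes
    (T : Type) [Fintype T] (t : Ordinal → T)
    (f : T × T → T)
    (hadd : ∀ α β : Ordinal, t (α + β) = f (t α, t β))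
    (m : T → T)
    (hsum : ∀ (α : ℕ → Ordinal) (c : T), (∀ i, 0 < α i) → (∀ i, t (α i) = c) →
      t (⨆ k : ℕ, (List.ofFn (fun i : Fin k => α (i : ℕ))).sum) = m c)
    (q r : ℕ) (hqr : q < r) (hr : q + 2 ≤ r)
    (heq : t (ω ^ (q : Ordinal)) = t (ω ^ (r : Ordinal))) :
    t (ω ^ ((q : Ordinal) + 1)) = t (ω ^ ((q : Ordinal) + 2)) :=
  key_step_power_stabilizes_general T t f hadd m hsum q r hr heq
end

section
/- Let α, β be ordinals and A, B nonempty types, and let W be a set of functions from (the ordinals below) α + β to A × B, the winning condition for Player I in a game of length α + β. For a play u of length α, let W_u denote the residual winning condition of length β: the set of v : β → A × B whose concatenation u ⌢ v (of length α + β) lies in W. Assume (a) for every u : α → A × B, the game of length β with winning condition W_u is determined, and (b) the game of length α with winning condition U = { u | Player I has a winning strategy in the length-β game with condition W_u } is determined. Then the game of length α + β with winning condition W is determined. -/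
/-- The game of length `γ` over `A × B` with winning condition `W` (for Player I)
is determined: one of the players has a winning strategy. -/
def Determined (γ : Ordinal) (A B : Type*) (W : Set (Below γ → A × B)) : Prop :=
  (∃ F : (Below γ → B) → (Below γ → A),
      StronglyCausal F ∧ ∀ g, (fun δ => (F g δ, g δ)) ∈ W) ∨
  (∃ G : (Below γ → A) → (Below γ → B),
      Causal G ∧ ∀ f, (fun δ => (f δ, G f δ)) ∉ W)

/-- Concatenation of a play of length `α` with a play of length `β`,
giving a play of length `α + β`. -/
noncomputable def concatPlay {α β : Ordinal} {C : Type*}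
    (u : Below α → C) (v : Below β → C) : Below (α + β) → C :=
  fun δ =>
    if h : δ.val < α then u ⟨δ.val, h⟩
    else v ⟨δ.val - α, (Ordinal.sub_lt_of_le (le_of_not_gt h)).mpr δ.2⟩

/-!
Player I plays a winning strategy for the set `U` of good positions during the first `α` rounds;
the resulting position `u` lies in `U`, so from round `α` on he plays a winning strategy of the
residual game `W_u`, chosen as a function of Player II's first `α` moves. Dually, Player II first
forces the position out of `U` and then, since `W_u` is determined and Player I does not win it,
wins the residual game. Gluing two causal strategies in this way gives a causal strategy.
-/

def Below.castAdd {α : Ordinal} (β : Ordinal) (δ : Below α) : Below (α + β) :=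
  ⟨δ.val, δ.2.trans_le le_self_add⟩

def Below.natAdd (α : Ordinal) {β : Ordinal} (δ : Below β) : Below (α + β) :=
  ⟨α + δ.val, add_lt_add_right δ.2 α⟩

section Concat

variable {α β : Ordinal} {C : Type*}

def headPlay (f : Below (α + β) → C) : Below α → C := fun δ => f (Below.castAdd β δ)

def tailPlay (f : Below (α + β) → C) : Below β → C := fun δ => f (Below.natAdd α δ)

theorem concatPlay_headPlay_tailPlay (f : Below (α + β) → C) :
    concatPlay (headPlay f) (tailPlay f) = f := by
  funext δ
  unfold concatPlay headPlay tailPlay Below.castAdd Below.natAdd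
  split_ifs with h
  · rfl
  · exact congrArg f (Subtype.ext (Ordinal.add_sub_cancel_of_le (not_lt.mp h)))

theorem concatPlay_pair {X Y : Type*} (u₁ : Below α → X) (u₂ : Below α → Y)
    (v₁ : Below β → X) (v₂ : Below β → Y) :
    concatPlay (fun δ => (u₁ δ, u₂ δ)) (fun δ => (v₁ δ, v₂ δ)) =
      fun δ => (concatPlay u₁ v₁ δ, concatPlay u₂ v₂ δ) := by
  funext δ
  unfold concatPlay
  split_ifs <;> rfl

end Concat

/-- `StronglyCausal` is the case `R = (· < ·)`, `Causal` the case `R = (· ≤ ·)`. -/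
def CausalWrt (R : Ordinal → Ordinal → Prop) {α : Ordinal} {X Y : Type*}
    (F : (Below α → X) → (Below α → Y)) : Prop :=
  ∀ f f' : Below α → X, ∀ β : Below α,
    (∀ γ : Below α, R γ.val β.val → f γ = f' γ) →
    ∀ γ : Below α, γ.val ≤ β.val → F f γ = F f' γ

section Strategy

variable {α β : Ordinal} {X Y : Type*}

/-- Play `σ` during the first `α` rounds and then `τ u`, where `u` is the opponent's
first `α` moves. -/
noncomputable def concatStrategy (σ : (Below α → X) → (Below α → Y))
    (τ : (Below α → X) → (Below β → X) → (Below β → Y)) :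
    (Below (α + β) → X) → (Below (α + β) → Y) :=
  fun f => concatPlay (σ (headPlay f)) (τ (headPlay f) (tailPlay f))

theorem CausalWrt.concatStrategy {R : Ordinal → Ordinal → Prop}
    (lt_imp : ∀ a b, a < b → R a b) (add_left : ∀ a b c, R b c → R (a + b) (a + c))
    {σ : (Below α → X) → (Below α → Y)} {τ : (Below α → X) → (Below β → X) → (Below β → Y)}
    (hσ : CausalWrt R σ) (hτ : ∀ u, CausalWrt R (τ u)) :
    CausalWrt R (concatStrategy σ τ) := by
  intro f f' p hagree q hqp
  unfold _root_.concatStrategy concatPlay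
  by_cases hp : p.val < α
  · have hq : q.val < α := hqp.trans_lt hp
    rw [dif_pos hq, dif_pos hq]
    exact hσ _ _ ⟨p.val, hp⟩ (fun γ hγ => hagree (Below.castAdd β γ) hγ) ⟨q.val, hq⟩ hqp
  have hαp : α ≤ p.val := not_lt.mp hp
  have hhead : headPlay f = headPlay f' :=
    funext fun γ => hagree (Below.castAdd β γ) (lt_imp _ _ (γ.2.trans_le hαp))
  by_cases hq : q.val < α
  · rw [dif_pos hq, dif_pos hq, hhead]
  rw [dif_neg hq, dif_neg hq, hhead]
  refine hτ _ _ _ ⟨p.val - α, (Ordinal.sub_lt_of_le hαp).mpr p.2⟩ (fun γ hγ => hagree _ ?_) _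
    (Ordinal.sub_le.mpr (by rwa [Ordinal.add_sub_cancel_of_le hαp]))
  have hshift := add_left α _ _ hγ
  rwa [Ordinal.add_sub_cancel_of_le hαp] at hshift

theorem StronglyCausal.concatStrategy
    {σ : (Below α → X) → (Below α → Y)} {τ : (Below α → X) → (Below β → X) → (Below β → Y)}
    (hσ : StronglyCausal σ) (hτ : ∀ u, StronglyCausal (τ u)) :
    StronglyCausal (concatStrategy σ τ) :=
  CausalWrt.concatStrategy (fun _ _ h => h) (fun a _ _ h => add_lt_add_right h a) hσ hτ

theorem Causal.concatStrategy
    {σ : (Below α → X) → (Below α → Y)} {τ : (Below α → X) → (Below β → X) → (Below β → Y)}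
    (hσ : Causal σ) (hτ : ∀ u, Causal (τ u)) :
    Causal (concatStrategy σ τ) :=
  CausalWrt.concatStrategy (fun _ _ h => h.le) (fun a _ _ h => add_le_add_right h a) hσ hτ

end Strategy

section Winning

variable {γ α β : Ordinal} {A B : Type*}

def PlayerIWins (W : Set (Below γ → A × B)) : Prop :=
  ∃ F : (Below γ → B) → (Below γ → A), StronglyCausal F ∧ ∀ g, (fun δ => (F g δ, g δ)) ∈ W

def PlayerIIWins (W : Set (Below γ → A × B)) : Prop :=
  ∃ G : (Below γ → A) → (Below γ → B), Causal G ∧ ∀ f, (fun δ => (f δ, G f δ)) ∉ W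

def residualCondition (W : Set (Below (α + β) → A × B)) (u : Below α → A × B) :
    Set (Below β → A × B) :=
  {v | concatPlay u v ∈ W}

theorem PlayerIWins.add {W : Set (Below (α + β) → A × B)} {U : Set (Below α → A × B)}
    (hU : PlayerIWins U) (hres : ∀ u ∈ U, PlayerIWins (residualCondition W u)) :
    PlayerIWins W := by
  obtain ⟨σ, hσ, hσU⟩ := hU
  choose τ hτ hτW using fun g => hres _ (hσU g)
  refine ⟨concatStrategy σ τ, hσ.concatStrategy hτ, fun g => ?_⟩
  have hplay := hτW (headPlay g) (tailPlay g)
  rwa [residualCondition, Set.mem_ofPred_eq, concatPlay_pair, concatPlay_headPlay_tailPlay] at hplay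

theorem PlayerIIWins.add {W : Set (Below (α + β) → A × B)} {U : Set (Below α → A × B)}
    (hU : PlayerIIWins U) (hres : ∀ u ∉ U, PlayerIIWins (residualCondition W u)) :
    PlayerIIWins W := by
  obtain ⟨σ, hσ, hσU⟩ := hU
  choose τ hτ hτW using fun f => hres _ (hσU f)
  refine ⟨concatStrategy σ τ, hσ.concatStrategy hτ, fun f hf => ?_⟩
  apply hτW (headPlay f) (tailPlay f)
  rwa [residualCondition, Set.mem_ofPred_eq, concatPlay_pair, concatPlay_headPlay_tailPlay]

end Winning

theorem addition_determinacy_general (α β : Ordinal) (A B : Type)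
    (W : Set (Below (α + β) → A × B))
    (hres : ∀ u : Below α → A × B,
      Determined β A B {v | concatPlay u v ∈ W})
    (hU : Determined α A B
      {u | ∃ F : (Below β → B) → (Below β → A),
        StronglyCausal F ∧ ∀ g, (fun δ => (F g δ, g δ)) ∈ {v | concatPlay u v ∈ W}}) :
    Determined (α + β) A B W := by
  rcases hU with hI | hII
  · exact Or.inl (PlayerIWins.add hI fun _ hu => hu)
  · exact Or.inr (PlayerIIWins.add hII fun u hu => (hres u).resolve_left hu)

theorem addition_determinacy (α β : Ordinal) (A B : Type) [Nonempty A] [Nonempty B]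
    (W : Set (Below (α + β) → A × B))
    (hres : ∀ u : Below α → A × B,
      Determined β A B {v | concatPlay u v ∈ W})
    (hU : Determined α A B
      {u | ∃ F : (Below β → B) → (Below β → A),
        StronglyCausal F ∧ ∀ g, (fun δ => (F g δ, g δ)) ∈ {v | concatPlay u v ∈ W}}) :
    Determined (α + β) A B W :=
  addition_determinacy_general α β A B W hres hU
end
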